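/- For all real θ₁, θ₂, with f_n(θ) = cos^n θ + cos^n(θ−2π/3) + cos^n(θ+2π/3), one has (f₈(θ₁) − f₈(θ₂))² = (9/256)·(cos(6θ₁) − cos(6θ₂))². -/
import Mathlib

noncomputable def f (n : ℕ) (θ : ℝ) : ℝ :=
  Real.cos θ ^ n + Real.cos (θ - 2 * Real.pi / 3) ^ n + Real.cos (θ + 2 * Real.pi / 3) ^ n

lemma cos_two_pi_div_three : Real.cos (2 * Real.pi / 3) = -(1/2) := by
  have : (2 * Real.pi / 3 : ℝ) = Real.pi - Real.pi / 3 := by ring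
  rw [this, Real.cos_pi_sub, Real.cos_pi_div_three]

lemma sin_two_pi_div_three : Real.sin (2 * Real.pi / 3) = Real.sqrt 3 / 2 := by
  have : (2 * Real.pi / 3 : ℝ) = Real.pi - Real.pi / 3 := by ring
  rw [this, Real.sin_pi_sub, Real.sin_pi_div_three]

lemma f8_eq (θ : ℝ) : f 8 θ = 105/128 + 3/16 * Real.cos (6 * θ) := by
  have h6 : (6:ℝ) * θ = 2 * (3 * θ) := by ring
  have hc6 : Real.cos (6 * θ) = 2 * (4 * Real.cos θ ^ 3 - 3 * Real.cos θ) ^ 2 - 1 := by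
    rw [h6, Real.cos_two_mul, Real.cos_three_mul]
  have h1 : Real.cos (θ - 2 * Real.pi / 3)
      = -(1/2) * Real.cos θ + Real.sqrt 3 / 2 * Real.sin θ := by
    rw [Real.cos_sub, cos_two_pi_div_three, sin_two_pi_div_three]; ring
  have h2 : Real.cos (θ + 2 * Real.pi / 3)
      = -(1/2) * Real.cos θ - Real.sqrt 3 / 2 * Real.sin θ := by
    rw [Real.cos_add, cos_two_pi_div_three, sin_two_pi_div_three]; ring
  have hs : Real.sin θ ^ 2 = 1 - Real.cos θ ^ 2 := by
    have := Real.sin_sq_add_cos_sq θ; linarith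
  have hr : Real.sqrt 3 ^ 2 = 3 := Real.sq_sqrt (by norm_num)
  unfold f
  rw [h1, h2, hc6]
  set c := Real.cos θ
  set s := Real.sin θ
  set r := Real.sqrt 3
  linear_combination ((81/128) + (81/128)*s^2 + (81/128)*s^4 + (81/128)*s^6 + (513/128)*c^2
      + (297/64)*c^2*s^2 + (675/128)*c^2*s^4 + (-639/128)*c^4 + (-45/128)*c^4*s^2
      + (129/128)*c^6) * hs
    + ((27/128)*s^8 + (9/128)*s^8*r^2 + (3/128)*s^8*r^4 + (1/128)*s^8*r^6 + (63/32)*c^2*s^6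
      + (21/32)*c^2*s^6*r^2 + (7/32)*c^2*s^6*r^4 + (105/64)*c^4*s^4 + (35/64)*c^4*s^4*r^2
      + (7/32)*c^6*s^2) * hr

theorem f8_sq (θ₁ θ₂ : ℝ) :
    (f 8 θ₁ - f 8 θ₂) ^ 2 = 9 / 256 * (Real.cos (6 * θ₁) - Real.cos (6 * θ₂)) ^ 2 := by
  rw [f8_eq, f8_eq]; ring
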